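/- If both n and d are even (and gcd(q,d)=1, excluding finitely many characteristics), then the average over monic square-free polynomials f of degree n over F_q of |{(x,y) : y^d = f(x)}| equals q - q^{-(n-2)}. -/

import Mathlib

/-!
Translating `x` to `0` (via `taylor x`) shows that the number of points is `q * ∑ y, N n (y ^ d)`,
where `N n c` counts the monic squarefree `f` of degree `n` with `f(0) = c`. Writing every monic
`f` uniquely as `s * g ^ 2` with `s` squarefree gives, for `c ≠ 0`,
`q ^ (n - 1) = ∑ k, ∑ g, N (n - 2k) (c / g(0) ^ 2)`, the inner sum running over monic `g` of
degree `k` with `g(0) ≠ 0`. Comparing this identity for `n` and `n - 2` gives a recurrence whose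
solution is `N n c = A n - [n even] χ(c)`, with `χ` the quadratic character and
`A n = q ^ (n - 1) - q ^ (n - 2) + ⋯ ± 1`. Dividing by `X` gives `N n 0 = (q - 1) A (n - 1)`.
For `d` even every nonzero `y ^ d` is a square, so
`∑ y, N n (y ^ d) = (q - 1) (A (n - 1) + A n - 1) = (q - 1) (q ^ (n - 1) - 1)`.
-/

open Polynomial Finset

theorem exists_squarefree_mul_sq {α : Type*} [CommMonoidWithZero α] [IsCancelMulZero α]
    [WfDvdMonoid α] {x : α} (hx : x ≠ 0) : ∃ s g : α, Squarefree s ∧ s * g ^ 2 = x := by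
  induction x using (wellFounded_dvdNotUnit (α := α)).induction with
  | _ x ih =>
  by_cases hsq : Squarefree x
  · exact ⟨x, 1, hsq, by rw [one_pow, mul_one]⟩
  · obtain ⟨y, ⟨t, rfl⟩, hy⟩ : ∃ y, y * y ∣ x ∧ ¬IsUnit y := by
      simpa [Squarefree] using hsq
    have ht : t ≠ 0 := right_ne_zero_of_mul hx
    obtain ⟨s, g, hs, rfl⟩ := ih t ⟨ht, y * y, fun h => hy (isUnit_of_mul_isUnit_left h),
      mul_comm _ _⟩ ht
    exact ⟨s, y * g, hs, by rw [mul_pow, sq y]; ac_rfl⟩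

theorem associated_of_squarefree_mul_sq_eq {α : Type*} [CommMonoidWithZero α] [GCDMonoid α]
    {s s' g g' : α} (hs : Squarefree s) (hs' : Squarefree s') (h : s * g ^ 2 = s' * g' ^ 2) :
    Associated g g' := by
  obtain ⟨a, a', hg, hg', hunit⟩ := extract_gcd g g'
  generalize gcd g g' = e at hg hg'
  subst hg hg'
  by_cases he : e = 0
  · rw [he, zero_mul, zero_mul]
  have hcop : IsRelPrime (a ^ 2) (a' ^ 2) := (gcd_isUnit_iff_isRelPrime.mp hunit).pow
  have h' : s * a ^ 2 = s' * a' ^ 2 := by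
    rw [mul_pow, mul_pow, mul_left_comm, mul_left_comm s'] at h
    exact mul_left_cancel₀ (pow_ne_zero 2 he) h
  have ha : IsUnit a := hs' a (sq a ▸ hcop.dvd_of_dvd_mul_right (h' ▸ dvd_mul_left _ s))
  have ha' : IsUnit a' :=
    hs a' (sq a' ▸ hcop.symm.dvd_of_dvd_mul_right (h' ▸ dvd_mul_left _ s'))
  exact (associated_mul_unit_right _ _ ha).symm.trans (associated_mul_unit_right _ _ ha')

theorem Squarefree.map_mulEquiv {R S : Type*} [Monoid R] [Monoid S] (e : R ≃* S) {x : R}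
    (hx : Squarefree x) : Squarefree (e x) := fun y hy => by
  simpa using (hx (e.symm y) (by simpa using map_dvd e.symm hy)).map e

theorem ringChar_ne_two_of_coprime_card {F : Type*} [Field F] [Fintype F] {d : ℕ} (hd : Even d)
    (h : (Fintype.card F).Coprime d) : ringChar F ≠ 2 := by
  rw [Ne, FiniteField.even_card_iff_char_two, ← Nat.even_iff]
  intro hq
  have h2 := Nat.dvd_gcd hq.two_dvd hd.two_dvd
  rw [h.gcd_eq_one] at h2
  exact absurd h2 (by norm_num)

/-- `alternatingPowSum q n = (q ^ n - (-1) ^ n) / (q + 1)`. -/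
def alternatingPowSum (q : ℤ) : ℕ → ℤ
  | 0 => 0
  | n + 1 => q ^ n - alternatingPowSum q n

theorem mul_div_pow_sub_pow_pred_eq {q : ℚ} (hq : 1 < q) {n : ℕ} (hn : n ≠ 0) :
    q * ((q - 1) * (q ^ (n - 1) - 1)) / (q ^ n - q ^ (n - 1)) = q - q ^ (-((n : ℤ) - 2)) := by
  obtain ⟨m, rfl⟩ := Nat.exists_eq_add_one_of_ne_zero hn
  have hq0 : q ≠ 0 := by positivity
  have hq1 : q - 1 ≠ 0 := by linarith
  rw [show -(((m + 1 : ℕ) : ℤ) - 2) = 1 - m by push_cast; ring, zpow_sub₀ hq0, zpow_one,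
    zpow_natCast, Nat.add_sub_cancel, pow_succ]
  field_simp

namespace Polynomial

theorem finite_setOf_natDegree_le (R : Type*) [Semiring R] [Finite R] (n : ℕ) :
    {f : R[X] | f.natDegree ≤ n}.Finite := by
  refine Set.Finite.of_injOn (f := fun f (i : Fin (n + 1)) => f.coeff i) (Set.mapsTo_univ _ _)
    (fun f hf g hg hfg => ext fun i => ?_) Set.finite_univ
  by_cases hi : i ≤ n
  · exact congrFun hfg ⟨i, Nat.lt_succ_of_le hi⟩
  · rw [coeff_eq_zero_of_natDegree_lt (lt_of_le_of_lt hf (not_le.mp hi)),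
      coeff_eq_zero_of_natDegree_lt (lt_of_le_of_lt hg (not_le.mp hi))]

theorem X_mul_add_C_injective {R : Type*} [Ring R] {u : R} :
    Function.Injective fun g : R[X] => X * g + C u :=
  fun _ _ h => isRegular_X.left (add_right_cancel h)

theorem coeff_zero_mul_sq {R : Type*} [CommSemiring R] (s g : R[X]) :
    (s * g ^ 2).coeff 0 = s.coeff 0 * g.coeff 0 ^ 2 := by
  simp only [coeff_zero_eq_eval_zero, eval_mul, eval_pow]

section Field

variable {F : Type*} [Field F]

theorem squarefree_X_mul_iff {g : F[X]} :
    Squarefree (X * g) ↔ Squarefree g ∧ g.coeff 0 ≠ 0 := by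
  rw [squarefree_mul_iff, irreducible_X.isRelPrime_iff_not_dvd, X_dvd_iff]
  exact ⟨fun h => ⟨h.2.2, h.1⟩, fun h => ⟨h.2, irreducible_X.squarefree, h.1⟩⟩

theorem Monic.exists_squarefree_mul_sq {f : F[X]} (hf : f.Monic) :
    ∃ s g : F[X], s.Monic ∧ Squarefree s ∧ g.Monic ∧ s * g ^ 2 = f := by
  obtain ⟨s, g, hs, rfl⟩ := _root_.exists_squarefree_mul_sq hf.ne_zero
  have hg : g ≠ 0 := fun h => hf.ne_zero (by rw [h, zero_pow two_ne_zero, mul_zero])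
  have hlc : g.leadingCoeff ^ 2 ≠ 0 := pow_ne_zero 2 (leadingCoeff_ne_zero.mpr hg)
  have hgm : (g * C g.leadingCoeff⁻¹).Monic := monic_mul_leadingCoeff_inv hg
  have heq : s * C (g.leadingCoeff ^ 2) * (g * C g.leadingCoeff⁻¹) ^ 2 = s * g ^ 2 := by
    rw [mul_pow, ← C_pow, inv_pow, mul_mul_mul_comm, ← C_mul, mul_inv_cancel₀ hlc, C_1, mul_one]
  refine ⟨_, _, (hgm.pow 2).of_mul_monic_right (heq ▸ hf), ?_, hgm, heq⟩
  exact (associated_mul_unit_right s _ (isUnit_C.mpr hlc.isUnit)).squarefree_iff.mp hs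

theorem eq_of_squarefree_mul_sq_eq {s s' g g' : F[X]} (hs : Squarefree s)
    (hs' : Squarefree s') (hg : g.Monic) (hg' : g'.Monic) (h : s * g ^ 2 = s' * g' ^ 2) :
    s = s' ∧ g = g' := by
  classical
  obtain rfl := eq_of_monic_of_associated hg hg' (associated_of_squarefree_mul_sq_eq hs hs' h)
  exact ⟨mul_right_cancel₀ (pow_ne_zero 2 hg.ne_zero) h, rfl⟩

end Field

section FiniteField

open scoped Classical

variable (F : Type*) [Field F] [Fintype F]

noncomputable def monics (n : ℕ) : Finset F[X] :=
  ((finite_setOf_natDegree_le F n).subset fun _ hf => hf.2.le :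
    {f : F[X] | f.Monic ∧ f.natDegree = n}.Finite).toFinset

noncomputable def squarefreeMonics (n : ℕ) (c : F) : Finset F[X] :=
  (monics F n).filter fun f => Squarefree f ∧ f.coeff 0 = c

noncomputable def squareClassSum (j : ℕ) (c : F) : ℤ :=
  ∑ u ∈ univ.filter (· ≠ 0), (#(squarefreeMonics F j (c / u ^ 2)) : ℤ)

variable {F}

@[simp]
theorem mem_monics {n : ℕ} {f : F[X]} : f ∈ monics F n ↔ f.Monic ∧ f.natDegree = n := by
  simp [monics]

theorem monics_zero : monics F 0 = {1} := by
  ext f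
  simp only [mem_monics, mem_singleton]
  exact ⟨fun ⟨hm, hd⟩ => hm.natDegree_eq_zero.mp hd, fun h => h ▸ ⟨monic_one, natDegree_one⟩⟩

theorem filter_monics_succ_coeff_zero_eq (n : ℕ) (u : F) :
    (monics F (n + 1)).filter (·.coeff 0 = u) = (monics F n).image fun g => X * g + C u := by
  ext f
  simp only [mem_filter, mem_image, mem_monics]
  constructor
  · rintro ⟨⟨hm, hd⟩, rfl⟩
    refine ⟨f.divX, ⟨?_, by rw [natDegree_divX_eq_natDegree_tsub_one, hd, Nat.add_sub_cancel]⟩,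
      X_mul_divX_add f⟩
    rw [Monic, leadingCoeff, natDegree_divX_eq_natDegree_tsub_one, coeff_divX, hd,
      Nat.add_sub_cancel, ← hd]
    exact hm
  · rintro ⟨g, ⟨hm, hd⟩, rfl⟩
    have hXg : (X * g).natDegree = n + 1 := by rw [natDegree_X_mul hm.ne_zero, hd, add_comm]
    have hlt : (C u).degree < (X * g).degree := by
      rw [degree_eq_natDegree (monic_X.mul hm).ne_zero, hXg]
      exact degree_C_le.trans_lt (by exact_mod_cast Nat.succ_pos n)
    exact ⟨⟨(monic_X.mul hm).add_of_left hlt, by rw [natDegree_add_C, hXg]⟩, by simp⟩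

theorem card_filter_monics_succ_coeff_zero (n : ℕ) (u : F) :
    #((monics F (n + 1)).filter (·.coeff 0 = u)) = Fintype.card F ^ n := by
  induction n generalizing u with
  | zero =>
    rw [filter_monics_succ_coeff_zero_eq, card_image_of_injective _ X_mul_add_C_injective,
      monics_zero, card_singleton, pow_zero]
  | succ n ih =>
    rw [filter_monics_succ_coeff_zero_eq, card_image_of_injective _ X_mul_add_C_injective,
      card_eq_sum_card_fiberwise (f := (·.coeff 0)) (t := univ) fun _ _ => mem_univ _,
      sum_congr rfl fun v _ => ih v, sum_const, card_univ, smul_eq_mul, pow_succ']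

theorem sum_monics_succ_apply_coeff_zero {M : Type*} [AddCommMonoid M] (n : ℕ) (h : F → M) :
    ∑ g ∈ monics F (n + 1), h (g.coeff 0) = Fintype.card F ^ n • ∑ u, h u := by
  rw [← sum_fiberwise' (monics F (n + 1)) (·.coeff 0), smul_sum]
  simp only [sum_const, card_filter_monics_succ_coeff_zero]

theorem card_filter_ne_zero : #(univ.filter fun u : F => u ≠ 0) = Fintype.card F - 1 := by
  rw [filter_ne', card_erase_of_mem (mem_univ _), card_univ]

/-- The bijection is `(k, g, s) ↦ s * g ^ 2`. -/
theorem card_filter_monics_coeff_zero_eq_sum (n : ℕ) {c : F} (hc : c ≠ 0) :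
    #((monics F n).filter (·.coeff 0 = c)) =
      ∑ k ∈ range (n / 2 + 1), ∑ g ∈ (monics F k).filter (·.coeff 0 ≠ 0),
        #(squarefreeMonics F (n - 2 * k) (c / g.coeff 0 ^ 2)) := by
  simp_rw [← card_sigma]
  symm
  refine card_bij (fun p _ => p.2.2 * p.2.1 ^ 2) ?_ ?_ ?_
  · rintro ⟨k, g, s⟩ hp
    simp only [squarefreeMonics, mem_sigma, mem_range, mem_filter, mem_monics] at hp ⊢
    obtain ⟨hk, ⟨⟨hgm, rfl⟩, hg0⟩, ⟨hsm, hsd⟩, -, hs0⟩ := hp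
    refine ⟨⟨hsm.mul (hgm.pow 2), ?_⟩, ?_⟩
    · rw [hsm.natDegree_mul (hgm.pow 2), hgm.natDegree_pow, hsd]
      omega
    · rw [coeff_zero_mul_sq, hs0, div_mul_cancel₀ c (pow_ne_zero 2 hg0)]
  · rintro ⟨k, g, s⟩ hp ⟨k', g', s'⟩ hp' heq
    simp only [squarefreeMonics, mem_sigma, mem_filter, mem_monics] at hp hp'
    obtain ⟨rfl, rfl⟩ :=
      eq_of_squarefree_mul_sq_eq hp.2.2.2.1 hp'.2.2.2.1 hp.2.1.1.1 hp'.2.1.1.1 heq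
    obtain rfl := hp.2.1.1.2.symm.trans hp'.2.1.1.2
    rfl
  · intro f hf
    rw [mem_filter, mem_monics] at hf
    obtain ⟨⟨hfm, rfl⟩, rfl⟩ := hf
    obtain ⟨s, g, hsm, hs, hgm, rfl⟩ := hfm.exists_squarefree_mul_sq
    have hdeg : (s * g ^ 2).natDegree = s.natDegree + 2 * g.natDegree := by
      rw [hsm.natDegree_mul (hgm.pow 2), hgm.natDegree_pow]
    have hg0 : g.coeff 0 ≠ 0 := fun h => hc (by rw [coeff_zero_mul_sq, h]; ring)
    refine ⟨⟨g.natDegree, g, s⟩, ?_, rfl⟩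
    simp only [squarefreeMonics, mem_sigma, mem_range, mem_filter, mem_monics, and_true]
    refine ⟨by omega, ⟨hgm, hg0⟩, ⟨hsm, by omega⟩, hs, ?_⟩
    rw [coeff_zero_mul_sq, mul_div_cancel_right₀ _ (pow_ne_zero 2 hg0)]

theorem pow_eq_card_squarefreeMonics_add_sum {n : ℕ} (hn : n ≠ 0) {c : F} (hc : c ≠ 0) :
    (Fintype.card F : ℤ) ^ (n - 1) = #(squarefreeMonics F n c) +
      ∑ k ∈ range (n / 2), (Fintype.card F : ℤ) ^ k * squareClassSum F (n - 2 * (k + 1)) c := by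
  obtain ⟨m, rfl⟩ := Nat.exists_eq_add_one_of_ne_zero hn
  have key := card_filter_monics_coeff_zero_eq_sum (m + 1) hc
  rw [card_filter_monics_succ_coeff_zero, sum_range_succ'] at key
  have hk0 : ∑ g ∈ (monics F 0).filter (·.coeff 0 ≠ 0),
      #(squarefreeMonics F (m + 1 - 2 * 0) (c / g.coeff 0 ^ 2)) =
        #(squarefreeMonics F (m + 1) c) := by
    simp [monics_zero, filter_singleton]
  have hk : ∀ k, (∑ g ∈ (monics F (k + 1)).filter (·.coeff 0 ≠ 0),
      #(squarefreeMonics F (m + 1 - 2 * (k + 1)) (c / g.coeff 0 ^ 2)) : ℤ) =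
      (Fintype.card F : ℤ) ^ k * squareClassSum F (m + 1 - 2 * (k + 1)) c := fun k => by
    rw [sum_filter, squareClassSum, sum_filter, ← Nat.cast_pow, ← nsmul_eq_mul]
    exact sum_monics_succ_apply_coeff_zero k fun u =>
      if u ≠ 0 then (#(squarefreeMonics F (m + 1 - 2 * (k + 1)) (c / u ^ 2)) : ℤ) else 0
  rw [hk0] at key
  rw [Nat.add_sub_cancel, ← Nat.cast_pow, key]
  push_cast
  rw [add_comm, sum_congr rfl fun k _ => hk k]

theorem card_squarefreeMonics_add_three (m : ℕ) {c : F} (hc : c ≠ 0) :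
    (#(squarefreeMonics F (m + 3) c) : ℤ) = (Fintype.card F : ℤ) ^ (m + 2) -
      (Fintype.card F : ℤ) ^ (m + 1) + Fintype.card F * #(squarefreeMonics F (m + 1) c) -
      squareClassSum F (m + 1) c := by
  have h3 := pow_eq_card_squarefreeMonics_add_sum (n := m + 3) (by omega) hc
  have h1 := pow_eq_card_squarefreeMonics_add_sum (n := m + 1) (by omega) hc
  rw [show (m + 3) / 2 = (m + 1) / 2 + 1 by omega, sum_range_succ'] at h3
  simp only [show ∀ k, m + 3 - 2 * (k + 1 + 1) = m + 1 - 2 * (k + 1) by omega, pow_succ,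
    mul_comm _ (Fintype.card F : ℤ), mul_assoc, ← mul_sum] at h3
  rw [show m + 3 - 1 = m + 2 by omega, show m + 3 - 2 * (0 + 1) = m + 1 by omega, pow_zero,
    one_mul] at h3
  rw [Nat.add_sub_cancel] at h1
  linear_combination (Fintype.card F : ℤ) * h1 - h3

theorem card_squarefreeMonics_zero (c : F) :
    #(squarefreeMonics F 0 c) = if c = 1 then 1 else 0 := by
  by_cases h : c = 1 <;> simp [squarefreeMonics, monics_zero, filter_singleton, h, eq_comm]

theorem squareClassSum_zero (hF : ringChar F ≠ 2) {c : F} (hc : c ≠ 0) :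
    squareClassSum F 0 c = quadraticChar F c + 1 := by
  rw [squareClassSum, ← quadraticChar_card_sqrts hF c]
  simp only [card_squarefreeMonics_zero, Nat.cast_ite, Nat.cast_one, Nat.cast_zero, sum_boole]
  congr 2
  ext u
  simp only [mem_filter, mem_univ, true_and, Set.mem_toFinset, Set.mem_ofPred_eq]
  constructor
  · rintro ⟨hu, h⟩
    exact ((div_eq_one_iff_eq (pow_ne_zero 2 hu)).mp h).symm
  · rintro rfl
    have hu : u ≠ 0 := by rintro rfl; exact hc (zero_pow two_ne_zero)
    exact ⟨hu, div_self (pow_ne_zero 2 hu)⟩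

theorem card_squarefreeMonics_eq (hF : ringChar F ≠ 2) :
    ∀ {n : ℕ}, n ≠ 0 → ∀ {c : F}, c ≠ 0 → (#(squarefreeMonics F n c) : ℤ) =
      alternatingPowSum (Fintype.card F) n - if Even n then quadraticChar F c else 0
  | 0, h, _, _ => absurd rfl h
  | 1, _, c, hc => by
    have h := pow_eq_card_squarefreeMonics_add_sum one_ne_zero hc
    rw [Nat.sub_self, pow_zero, show 1 / 2 = 0 from rfl, range_zero, sum_empty, add_zero] at h
    rw [if_neg Nat.not_even_one, ← h, alternatingPowSum, alternatingPowSum, pow_zero, sub_zero,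
      sub_zero]
  | 2, _, c, hc => by
    have h := pow_eq_card_squarefreeMonics_add_sum two_ne_zero hc
    rw [show 2 / 2 = 1 from rfl, sum_range_one, pow_zero, one_mul,
      show 2 - 2 * (0 + 1) = 0 from rfl, squareClassSum_zero hF hc, show 2 - 1 = 1 from rfl,
      pow_one] at h
    rw [if_pos even_two, alternatingPowSum, alternatingPowSum, alternatingPowSum]
    linear_combination -h
  | m + 3, _, c, hc => by
    have hχ : ∀ u ∈ univ.filter fun u : F => u ≠ 0,
        quadraticChar F (c / u ^ 2) = quadraticChar F c := fun u hu => by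
      rw [div_eq_mul_inv, map_mul, ← inv_pow,
        quadraticChar_sq_one' (inv_ne_zero (mem_filter.mp hu).2), mul_one]
    have hG : squareClassSum F (m + 1) c = (Fintype.card F - 1 : ℤ) *
        (alternatingPowSum (Fintype.card F) (m + 1) -
          if Even (m + 1) then quadraticChar F c else 0) := by
      rw [squareClassSum, sum_congr rfl fun u hu => card_squarefreeMonics_eq hF (by omega)
        (div_ne_zero hc (pow_ne_zero 2 (mem_filter.mp hu).2))]
      rw [sum_congr rfl fun u hu => by rw [hχ u hu], sum_const, card_filter_ne_zero,
        nsmul_eq_mul, Nat.cast_sub Fintype.card_pos, Nat.cast_one]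
    rw [card_squarefreeMonics_add_three m hc, card_squarefreeMonics_eq hF (by omega) hc, hG]
    simp only [alternatingPowSum, show m + 3 = m + 1 + 1 + 1 by rfl, Nat.even_add_one, not_not]
    split_ifs <;> ring

theorem card_squarefreeMonics_succ_zero_eq_sum (n : ℕ) :
    #(squarefreeMonics F (n + 1) 0) = ∑ v ∈ univ.filter (· ≠ 0), #(squarefreeMonics F n v) := by
  have hX : squarefreeMonics F (n + 1) 0 =
      ((monics F n).filter fun g => Squarefree g ∧ g.coeff 0 ≠ 0).image (X * · + C 0) :=
    calc squarefreeMonics F (n + 1) 0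
        _ = ((monics F (n + 1)).filter (·.coeff 0 = 0)).filter Squarefree := by
          rw [squarefreeMonics, filter_filter]
          exact filter_congr fun _ _ => and_comm
        _ = _ := by
          rw [filter_monics_succ_coeff_zero_eq, filter_image]
          simp only [C_0, add_zero, squarefree_X_mul_iff]
  rw [hX, card_image_of_injective _ X_mul_add_C_injective,
    card_eq_sum_card_fiberwise (f := (·.coeff 0)) (t := univ.filter (· ≠ 0))
      fun g hg => mem_filter.mpr ⟨mem_univ _, (mem_filter.mp hg).2.2⟩]
  refine sum_congr rfl fun v hv => ?_
  have hv0 : v ≠ 0 := (mem_filter.mp hv).2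
  rw [squarefreeMonics, filter_filter]
  refine congrArg card (filter_congr fun g _ => ⟨?_, ?_⟩)
  · exact fun ⟨⟨hsq, _⟩, hg⟩ => ⟨hsq, hg⟩
  · exact fun ⟨hsq, hg⟩ => ⟨⟨hsq, hg ▸ hv0⟩, hg⟩

theorem card_squarefreeMonics_succ_zero (hF : ringChar F ≠ 2) {n : ℕ} (hn : n ≠ 0) :
    (#(squarefreeMonics F (n + 1) 0) : ℤ) =
      (Fintype.card F - 1) * alternatingPowSum (Fintype.card F) n := by
  have hχ : ∑ v ∈ univ.filter (· ≠ 0), quadraticChar F v = 0 := by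
    rw [sum_filter_of_ne (p := fun v : F => v ≠ 0)
      fun v _ h hv => h (by rw [hv, MulChar.map_zero]), quadraticChar_sum_zero hF]
  rw [card_squarefreeMonics_succ_zero_eq_sum, Nat.cast_sum,
    sum_congr rfl fun v hv => card_squarefreeMonics_eq hF hn (mem_filter.mp hv).2,
    sum_sub_distrib, sum_const, card_filter_ne_zero, nsmul_eq_mul,
    Nat.cast_sub Fintype.card_pos, Nat.cast_one]
  split_ifs
  · rw [hχ, sub_zero]
  · rw [sum_const_zero, sub_zero]

theorem sum_card_squarefreeMonics_pow (hF : ringChar F ≠ 2) {n d : ℕ} (hn : Even n)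
    (hn0 : n ≠ 0) (hd : Even d) (hd0 : d ≠ 0) :
    ∑ y : F, (#(squarefreeMonics F n (y ^ d)) : ℤ) =
      (Fintype.card F - 1) * ((Fintype.card F : ℤ) ^ (n - 1) - 1) := by
  obtain ⟨m, rfl⟩ := Nat.exists_eq_add_one_of_ne_zero hn0
  have hm : m ≠ 0 := by rintro rfl; exact Nat.not_even_one hn
  obtain ⟨e, rfl⟩ := hd
  have hunit : ∀ y ∈ univ.erase (0 : F), (#(squarefreeMonics F (m + 1) (y ^ (e + e))) : ℤ) =
      alternatingPowSum (Fintype.card F) (m + 1) - 1 := fun y hy => by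
    have hy : y ^ e ≠ 0 := pow_ne_zero e (ne_of_mem_erase hy)
    rw [card_squarefreeMonics_eq hF (by omega) (by rw [pow_add]; exact mul_ne_zero hy hy),
      if_pos hn, ← two_mul, pow_mul', quadraticChar_sq_one' hy]
  rw [← add_sum_erase _ _ (mem_univ 0), sum_congr rfl hunit, sum_const,
    card_erase_of_mem (mem_univ _), card_univ, zero_pow hd0, card_squarefreeMonics_succ_zero hF hm,
    nsmul_eq_mul, Nat.cast_sub Fintype.card_pos, Nat.add_sub_cancel, alternatingPowSum]
  ring

theorem card_filter_monics_eval_eq (n : ℕ) (x v : F) :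
    #((monics F n).filter fun f => Squarefree f ∧ f.eval x = v) = #(squarefreeMonics F n v) := by
  refine card_nbij' (taylor x) (taylor (-x)) ?_ ?_ ?_ ?_
  · intro f hf
    simp only [squarefreeMonics, coe_filter, mem_monics, Set.mem_ofPred_eq] at hf ⊢
    obtain ⟨⟨hm, hd⟩, hs, rfl⟩ := hf
    exact ⟨⟨by rw [Monic, leadingCoeff_taylor, hm], by rw [natDegree_taylor, hd]⟩,
      hs.map_mulEquiv (taylorEquiv x).toMulEquiv, taylor_coeff_zero x f⟩
  · intro g hg
    simp only [squarefreeMonics, coe_filter, mem_monics, Set.mem_ofPred_eq] at hg ⊢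
    obtain ⟨⟨hm, hd⟩, hs, rfl⟩ := hg
    refine ⟨⟨by rw [Monic, leadingCoeff_taylor, hm], by rw [natDegree_taylor, hd]⟩,
      hs.map_mulEquiv (taylorEquiv (-x)).toMulEquiv, ?_⟩
    rw [taylor_eval, add_neg_cancel, coeff_zero_eq_eval_zero]
  · intro f _
    simp only [taylor_taylor, neg_add_cancel, taylor_zero]
  · intro g _
    simp only [taylor_taylor, add_neg_cancel, taylor_zero]

theorem natCard_points_eq_mul_sum (n d : ℕ) :
    Nat.card {p : F[X] × F × F // p.1.Monic ∧ Squarefree p.1 ∧ p.1.natDegree = n ∧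
      p.2.2 ^ d = p.1.eval p.2.1} = Fintype.card F * ∑ y : F, #(squarefreeMonics F n (y ^ d)) :=
  calc _ = #((monics F n ×ˢ univ).filter fun p : F[X] × F × F =>
          Squarefree p.1 ∧ p.1.eval p.2.1 = p.2.2 ^ d) := by
        rw [← Nat.card_eq_finsetCard]
        refine Nat.card_congr (Equiv.subtypeEquivRight fun p => ?_)
        simp only [mem_filter, mem_product, mem_monics, mem_univ, and_true,
          eq_comm (a := p.2.2 ^ d)]
        tauto
    _ = ∑ z : F × F, #((monics F n).filter fun f => Squarefree f ∧ f.eval z.1 = z.2 ^ d) := by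
        simp only [card_filter, sum_product, sum_comm (s := monics F n)]
    _ = ∑ _x : F, ∑ y : F, #(squarefreeMonics F n (y ^ d)) := by
        rw [← univ_product_univ, sum_product]
        simp only [card_filter_monics_eval_eq]
    _ = _ := by rw [sum_const, card_univ, smul_eq_mul]

end FiniteField

end Polynomial

/-- If both `n` and `d` are even (`n > 2`), then excluding finitely many
characteristics, for every finite field `F` of cardinality `q` coprime to `d`,
the average over monic square-free polynomials `f` of degree `n` of the number
of points `(x, y)` with `y ^ d = f x` equals `q - q ^ (-(n - 2))`. -/
theorem average_points_superelliptic_even (n d : ℕ) (hn : 2 < n)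
    (hne : Even n) (hde : Even d) :
    ∃ S : Finset ℕ, ∀ (F : Type) [Field F] [Fintype F],
      ringChar F ∉ S → Nat.Coprime (Fintype.card F) d →
      (Nat.card {p : Polynomial F × F × F //
          p.1.Monic ∧ Squarefree p.1 ∧ p.1.natDegree = n ∧
          p.2.2 ^ d = p.1.eval p.2.1} : ℚ) /
        ((Fintype.card F : ℚ) ^ n - (Fintype.card F : ℚ) ^ (n - 1)) =
      (Fintype.card F : ℚ) - (Fintype.card F : ℚ) ^ (-((n : ℤ) - 2)) := by
  refine ⟨∅, fun F _ _ _ hcop => ?_⟩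
  have hq : 1 < Fintype.card F := Fintype.one_lt_card
  have hd0 : d ≠ 0 := by
    rintro rfl
    exact hq.ne' (Nat.coprime_zero_right _ |>.mp hcop)
  have hsum : ∑ y : F, (#(squarefreeMonics F n (y ^ d)) : ℚ) =
      (Fintype.card F - 1) * ((Fintype.card F : ℚ) ^ (n - 1) - 1) := by
    exact_mod_cast sum_card_squarefreeMonics_pow (ringChar_ne_two_of_coprime_card hde hcop)
      hne (by omega) hde hd0
  rw [natCard_points_eq_mul_sum, Nat.cast_mul, Nat.cast_sum, hsum]
  exact mul_div_pow_sub_pow_pred_eq (by exact_mod_cast hq) (by omega)
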